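/- The function I is nondecreasing on the interval [0, 1] and nonincreasing on the interval [1, 2]; consequently I(t) ≤ I(1) for every t ≥ 0, i.e. sup_{t ≥ 0} I(t) = I(1). -/

import Mathlib

open MeasureTheory Real intervalIntegral

/-- `log⁺ r = log (max 1 r)`. -/
noncomputable def logPlus (r : ℝ) : ℝ := Real.log (max 1 r)

/-- `I(t) = ∫₀¹ log⁺ |t + e^{2πiθ}| dθ − log⁺ t`. -/
noncomputable def Ifun (t : ℝ) : ℝ :=
  (∫ θ in (0:ℝ)..1, logPlus ‖(t + Complex.exp (2 * Real.pi * Complex.I * θ))‖)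
    - logPlus t

/-!
Jensen's formula on the unit circle, `∫₀¹ log |t + e^{2πiθ}| dθ = log⁺ t`
(`circleAverage_log_norm_add_const_eq_posLog`), turns `I(t)` into the circle average of
`log⁺ |t + z|⁻¹`. For `t ≥ 1` the distance `|t + z|` grows with `t` at every point `z` of the
unit circle, so `I` decreases on `[1, ∞)`. For `t ≤ 1`, `I(t)` is the circle average of
`log⁺ |t + z|`; pairing `z` with `-z`, the sum `log⁺ |t + z| + log⁺ |t - z|` is nondecreasing
in `t ≥ 0`, so `I` increases on `[0, 1]`.
-/

open Complex hiding log exp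
open Metric Set Filter

theorem logPlus_eq_posLog {r : ℝ} (hr : 0 ≤ r) : logPlus r = log⁺ r :=
  (Real.posLog_eq_log_max_one hr).symm

theorem integral_exp_two_pi_mul_I_eq_circleAverage (f : ℂ → ℝ) :
    ∫ θ in (0:ℝ)..1, f (Complex.exp (2 * π * I * θ)) = circleAverage f 0 1 := by
  have h := intervalIntegral.integral_comp_mul_left (a := 0) (b := 1)
    (fun θ => f (circleMap 0 1 θ)) (c := 2 * π) (by positivity)
  simp only [mul_zero, mul_one, circleMap, zero_add, ofReal_one, one_mul] at h
  simp only [circleAverage_def, circleMap, zero_add, ofReal_one, one_mul, ← h]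
  congr with θ
  push_cast
  ring_nf

theorem circleAverage_comp_neg (f : ℂ → ℝ) :
    circleAverage (fun z => f (-z)) 0 1 = circleAverage f 0 1 := by
  simpa using (circleAverage_eq_circleAverage_zero_one (f := f) (c := 0) (R := -1)).symm

theorem circleAverage_mono_codiscreteWithin {f₁ f₂ : ℂ → ℝ} {c : ℂ} {R : ℝ}
    (hf₁ : CircleIntegrable f₁ c R) (hf₂ : CircleIntegrable f₂ c R)
    (h : f₁ ≤ᶠ[codiscreteWithin (sphere c |R|)] f₂) (hR : R ≠ 0) :
    circleAverage f₁ c R ≤ circleAverage f₂ c R := by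
  rw [circleAverage_def, circleAverage_def, smul_eq_mul, smul_eq_mul]
  gcongr
  apply intervalIntegral.integral_mono_ae_restrict two_pi_pos.le hf₁ hf₂
  apply ae_restrict_le_codiscreteWithin measurableSet_Icc
  exact codiscreteWithin_mono (subset_univ _) (circleMap_preimage_codiscrete hR h)

theorem norm_add_ofReal_le_norm_add_ofReal {w : ℂ} {s t : ℝ}
    (h : 0 ≤ (t - s) * (s + t + 2 * w.re)) : ‖w + s‖ ≤ ‖w + t‖ := by
  rw [← sq_le_sq₀ (norm_nonneg _) (norm_nonneg _), Complex.sq_norm, Complex.sq_norm,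
    normSq_apply, normSq_apply]
  simp only [add_re, add_im, ofReal_re, ofReal_im, add_zero]
  nlinarith

theorem monotoneOn_posLog_norm_add_add_neg_of_re_nonneg {w : ℂ} (hw : ‖w‖ ≤ 1)
    (hre : 0 ≤ w.re) :
    MonotoneOn (fun t : ℝ => log⁺ ‖w + t‖ + log⁺ ‖-w + t‖) (Ici 0) := by
  intro s (hs : 0 ≤ s) t (ht : 0 ≤ t) hst
  have h₁ : log⁺ ‖w + s‖ ≤ log⁺ ‖w + t‖ :=
    posLog_le_posLog (norm_nonneg _) (norm_add_ofReal_le_norm_add_ofReal (by nlinarith))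
  have h₂ : log⁺ ‖-w + s‖ ≤ log⁺ ‖-w + t‖ := by
    rcases le_total s (2 * w.re) with h | h
    · have hle : ‖-w + s‖ ≤ 1 := by
        refine (norm_add_ofReal_le_norm_add_ofReal (t := 0) ?_).trans (by simpa using hw)
        simp only [neg_re]
        nlinarith
      rw [(posLog_eq_zero_iff _).2 (by rwa [abs_of_nonneg (norm_nonneg _)])]
      exact posLog_nonneg
    · refine posLog_le_posLog (norm_nonneg _) (norm_add_ofReal_le_norm_add_ofReal ?_)
      simp only [neg_re]
      nlinarith
  exact add_le_add h₁ h₂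

theorem monotoneOn_posLog_norm_add_add_neg {w : ℂ} (hw : ‖w‖ ≤ 1) :
    MonotoneOn (fun t : ℝ => log⁺ ‖w + t‖ + log⁺ ‖-w + t‖) (Ici 0) := by
  rcases le_total 0 w.re with hre | hre
  · exact monotoneOn_posLog_norm_add_add_neg_of_re_nonneg hw hre
  · have := monotoneOn_posLog_norm_add_add_neg_of_re_nonneg (w := -w) (by simpa using hw)
      (by simpa using hre)
    simpa only [neg_neg, add_comm (log⁺ ‖-w + _‖)] using this

theorem two_mul_circleAverage_eq_circleAverage_add_comp_neg {f : ℂ → ℝ} (hf : Continuous f) :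
    2 * circleAverage f 0 1 = circleAverage (fun z => f z + f (-z)) 0 1 := by
  rw [circleAverage_fun_add (f₁ := f) (f₂ := fun z => f (-z))
    (hf.continuousOn.circleIntegrable zero_le_one)
    ((hf.comp continuous_neg).continuousOn.circleIntegrable zero_le_one), circleAverage_comp_neg]
  ring

theorem monotoneOn_circleAverage_posLog_norm_add :
    MonotoneOn (fun t : ℝ => circleAverage (fun z => log⁺ ‖z + t‖) 0 1) (Ici 0) := by
  intro s hs t ht hst
  have hcont (u : ℝ) : Continuous fun z : ℂ => log⁺ ‖z + u‖ := by fun_prop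
  have hint (u : ℝ) :
      CircleIntegrable (fun z : ℂ => log⁺ ‖z + u‖ + log⁺ ‖-z + u‖) 0 1 :=
    ((hcont u).add ((hcont u).comp continuous_neg)).continuousOn.circleIntegrable'
  have hpair := circleAverage_mono (hint s) (hint t)
    fun z hz => monotoneOn_posLog_norm_add_add_neg (by simp_all) hs ht hst
  have hs₂ := two_mul_circleAverage_eq_circleAverage_add_comp_neg (hcont s)
  have ht₂ := two_mul_circleAverage_eq_circleAverage_add_comp_neg (hcont t)
  linarith

theorem posLog_inv_eq_posLog_sub_log (x : ℝ) : log⁺ x⁻¹ = log⁺ x - log x := by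
  linarith [posLog_sub_posLog_inv (x := x)]

theorem circleIntegrable_posLog_norm_add (a c : ℂ) (R : ℝ) :
    CircleIntegrable (fun z => log⁺ ‖z + a‖) c R :=
  (by fun_prop : Continuous fun z : ℂ => log⁺ ‖z + a‖).continuousOn.circleIntegrable'

theorem circleIntegrable_log_norm_add (a c : ℂ) (R : ℝ) :
    CircleIntegrable (fun z => log ‖z + a‖) c R := by
  simpa using circleIntegrable_log_norm_sub_const (a := -a) (c := c) R

theorem circleIntegrable_posLog_norm_add_inv (a c : ℂ) (R : ℝ) :
    CircleIntegrable (fun z => log⁺ ‖z + a‖⁻¹) c R := by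
  simp only [posLog_inv_eq_posLog_sub_log]
  exact (circleIntegrable_posLog_norm_add a c R).sub (circleIntegrable_log_norm_add a c R)

theorem circleAverage_posLog_norm_add_inv (a : ℂ) :
    circleAverage (fun z => log⁺ ‖z + a‖⁻¹) 0 1 =
      circleAverage (fun z => log⁺ ‖z + a‖) 0 1 - log⁺ ‖a‖ := by
  simp only [posLog_inv_eq_posLog_sub_log]
  rw [circleAverage_fun_sub (circleIntegrable_posLog_norm_add a 0 1)
    (circleIntegrable_log_norm_add a 0 1), circleAverage_log_norm_add_const_eq_posLog]

theorem antitoneOn_circleAverage_posLog_norm_add_inv :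
    AntitoneOn (fun t : ℝ => circleAverage (fun z => log⁺ ‖z + t‖⁻¹) 0 1) (Ici 1) := by
  intro s (hs : 1 ≤ s) t _ hst
  refine circleAverage_mono_codiscreteWithin (circleIntegrable_posLog_norm_add_inv _ 0 1)
    (circleIntegrable_posLog_norm_add_inv _ 0 1) ?_ one_ne_zero
  -- `z = -s` is excluded because there the integrand takes the junk value `log⁺ 0⁻¹ = 0`.
  filter_upwards [self_mem_codiscreteWithin _, compl_singleton_mem_codiscreteWithin (-(s : ℂ))]
    with z hz hzs
  rw [mem_sphere_zero_iff_norm, abs_one] at hz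
  have hre : -1 ≤ z.re := (abs_le.1 (hz ▸ abs_re_le_norm z)).1
  have hpos : 0 < ‖z + s‖ := norm_pos_iff.2 fun h => hzs (eq_neg_of_add_eq_zero_left h)
  have hle : ‖z + s‖ ≤ ‖z + t‖ := norm_add_ofReal_le_norm_add_ofReal (by nlinarith)
  exact posLog_le_posLog (inv_nonneg.2 (norm_nonneg _)) (inv_anti₀ hpos hle)

theorem Ifun_eq_circleAverage {t : ℝ} (ht : 0 ≤ t) :
    Ifun t = circleAverage (fun z => log⁺ ‖z + t‖) 0 1 - log⁺ t := by
  rw [Ifun, logPlus_eq_posLog ht, ← integral_exp_two_pi_mul_I_eq_circleAverage]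
  simp only [logPlus_eq_posLog (norm_nonneg _), add_comm (t : ℂ)]

theorem Ifun_eq_circleAverage_posLog_inv {t : ℝ} (ht : 0 ≤ t) :
    Ifun t = circleAverage (fun z => log⁺ ‖z + t‖⁻¹) 0 1 := by
  rw [circleAverage_posLog_norm_add_inv, Complex.norm_real, Real.norm_of_nonneg ht,
    Ifun_eq_circleAverage ht]

theorem stmt3 :
    MonotoneOn Ifun (Set.Icc (0:ℝ) 1) ∧
    AntitoneOn Ifun (Set.Icc (1:ℝ) 2) ∧
    (∀ t : ℝ, 0 ≤ t → Ifun t ≤ Ifun 1) ∧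
    IsGreatest (Ifun '' Set.Ici (0:ℝ)) (Ifun 1) := by
  have hmono : MonotoneOn Ifun (Icc 0 1) := by
    refine (monotoneOn_circleAverage_posLog_norm_add.mono Icc_subset_Ici_self).congr fun t ht => ?_
    have hlog : log⁺ t = 0 := (posLog_eq_zero_iff t).2 (abs_le.2 ⟨by linarith [ht.1], ht.2⟩)
    rw [Ifun_eq_circleAverage ht.1, hlog, sub_zero]
  have hanti : AntitoneOn Ifun (Ici 1) :=
    antitoneOn_circleAverage_posLog_norm_add_inv.congr fun t (ht : 1 ≤ t) =>
      (Ifun_eq_circleAverage_posLog_inv (zero_le_one.trans ht)).symm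
  have hle : ∀ t : ℝ, 0 ≤ t → Ifun t ≤ Ifun 1 := fun t ht =>
    (le_total t 1).elim (fun h => hmono ⟨ht, h⟩ ⟨zero_le_one, le_rfl⟩ h)
      (fun h => hanti self_mem_Ici h h)
  exact ⟨hmono, hanti.mono Icc_subset_Ici_self, hle,
    ⟨mem_image_of_mem _ (mem_Ici.2 zero_le_one), forall_mem_image.2 hle⟩⟩
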